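/- arXiv:1501.02533 — 2 statements merged into one kernel-verified Lean document; each statement's English description precedes it below -/
import Mathlib

section
/- More generally, for any partial order ⪯ on [n], the Lie algebra gl_n^⪯(R) of matrices supported on pairs i ⪯ j is solvable. -/
attribute [local instance 100] LieRing.ofAssociativeRing

/-!
Let `h i` be the number of predecessors of `i`, so that `h` strictly increases along `⪯`. The
matrices whose nonzero entries `(i, j)` all satisfy `h i + g ≤ h j` form a filtration `F g` with
`⁅F g, F g'⁆ ⊆ F (g + g')`, and `F (n + 1) = 0`. A commutator of two matrices of `gl_n^⪯(R)` lies
in `F 1`: its entries below or at the same height vanish because the diagonal of `gl_n^⪯(R)`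
is commutative. Hence the `k`-th derived algebra lies in `F k` and vanishes for `k = n + 1`.
-/

namespace LieSubmodule

variable {R L M : Type*} [CommRing R] [LieRing L] [LieAlgebra R L] [AddCommGroup M] [Module R M]
  [LieRingModule L M] [LieModule R L M]

theorem lieIdeal_oper_le_of_lie_mem {I : LieIdeal R L} {N : LieSubmodule R L M}
    {P : Submodule R M} (h : ∀ x ∈ I, ∀ m ∈ N, ⁅x, m⁆ ∈ P) : ⁅I, N⁆.toSubmodule ≤ P := by
  rw [lieIdeal_oper_eq_linear_span', Submodule.span_le]
  rintro _ ⟨x, hx, m, hm, rfl⟩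
  exact h x hx m hm

end LieSubmodule

namespace LieAlgebra

variable {R L : Type*} [CommRing R] [LieRing L] [LieAlgebra R L]

theorem derivedSeries_succ_le_of_filtration (F : ℕ → Submodule R L)
    (lie_mem_one : ∀ x y : L, ⁅x, y⁆ ∈ F 1)
    (lie_mem_add : ∀ a b x y, x ∈ F a → y ∈ F b → ⁅x, y⁆ ∈ F (a + b)) (k : ℕ) :
    (derivedSeries R L (k + 1)).toSubmodule ≤ F (k + 1) := by
  have base : (derivedSeries R L 1).toSubmodule ≤ F 1 :=
    LieSubmodule.lieIdeal_oper_le_of_lie_mem fun x _ y _ ↦ lie_mem_one x y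
  induction k with
  | zero => exact base
  | succ k ih =>
    rw [derivedSeries_def, derivedSeriesOfIdeal_succ]
    refine LieSubmodule.lieIdeal_oper_le_of_lie_mem fun x hx y hy ↦ lie_mem_add _ _ x y (ih hx) (base ?_)
    exact derivedSeriesOfIdeal_antitone ⊤ (Nat.le_add_left 1 k) hy

theorem isSolvable_of_filtration (F : ℕ → Submodule R L)
    (lie_mem_one : ∀ x y : L, ⁅x, y⁆ ∈ F 1)
    (lie_mem_add : ∀ a b x y, x ∈ F a → y ∈ F b → ⁅x, y⁆ ∈ F (a + b))
    {N : ℕ} (hN : F (N + 1) = ⊥) : IsSolvable L := by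
  refine IsSolvable.mk (R := R) (k := N + 1) ?_
  rw [← LieSubmodule.toSubmodule_eq_bot, eq_bot_iff, ← hN]
  exact derivedSeries_succ_le_of_filtration F lie_mem_one lie_mem_add N

end LieAlgebra

theorem exists_bounded_height {ι : Type*} [Finite ι] {r : ι → ι → Prop} (hrefl : ∀ i, r i i)
    (hantisymm : ∀ i j, r i j → r j i → i = j) (htrans : ∀ i j k, r i j → r j k → r i k) :
    ∃ h : ι → ℕ, (∀ i j, r i j → i ≠ j → h i < h j) ∧ ∀ i, h i ≤ Nat.card ι := by
  have below_subset {i j} (hij : r i j) : {k | r k i} ⊆ {k | r k j} :=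
    fun k hk ↦ htrans k i j hk hij
  refine ⟨fun i ↦ {k | r k i}.ncard, fun i j hij hne ↦ ?_, fun i ↦ Set.ncard_le_card _⟩
  refine Set.ncard_lt_ncard ⟨below_subset hij, fun hji ↦ hne ?_⟩ (Set.toFinite _)
  exact hantisymm i j hij (hji (hrefl j))

namespace Matrix

variable {ι R : Type*}

variable (R) in
def heightFiltration [Semiring R] (h : ι → ℕ) (g : ℕ) : Submodule R (Matrix ι ι R) where
  carrier := {m | ∀ i j, h j < h i + g → m i j = 0}
  add_mem' ha hb i j hij := by simp [ha i j hij, hb i j hij]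
  zero_mem' _ _ _ := rfl
  smul_mem' c m hm i j hij := by simp [hm i j hij]

@[simp]
theorem mem_heightFiltration [Semiring R] {h : ι → ℕ} {g : ℕ} {m : Matrix ι ι R} :
    m ∈ heightFiltration R h g ↔ ∀ i j, h j < h i + g → m i j = 0 :=
  Iff.rfl

theorem heightFiltration_eq_bot [Semiring R] {h : ι → ℕ} {N : ℕ} (hN : ∀ i, h i ≤ N) :
    heightFiltration R h (N + 1) = ⊥ := by
  refine eq_bot_iff.mpr fun m hm ↦ (Submodule.mem_bot R).mpr ?_
  ext i j
  exact mem_heightFiltration.mp hm i j (by have := hN j; omega)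

variable [Fintype ι]

theorem mul_mem_heightFiltration [Semiring R] {h : ι → ℕ} {g g' : ℕ} {a b : Matrix ι ι R}
    (ha : a ∈ heightFiltration R h g) (hb : b ∈ heightFiltration R h g') :
    a * b ∈ heightFiltration R h (g + g') := by
  rw [mem_heightFiltration] at ha hb ⊢
  intro i j hij
  rw [mul_apply]
  refine Finset.sum_eq_zero fun x _ ↦ ?_
  by_cases hx : h x < h i + g
  · rw [ha i x hx, zero_mul]
  · rw [hb x j (by omega), mul_zero]

theorem lie_mem_heightFiltration [Ring R] {h : ι → ℕ} {g g' : ℕ} {a b : Matrix ι ι R}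
    (ha : a ∈ heightFiltration R h g) (hb : b ∈ heightFiltration R h g') :
    ⁅a, b⁆ ∈ heightFiltration R h (g + g') := by
  rw [Ring.lie_def]
  refine sub_mem (mul_mem_heightFiltration ha hb) ?_
  rw [add_comm]
  exact mul_mem_heightFiltration hb ha

theorem lie_mem_heightFiltration_one [CommRing R] {r : ι → ι → Prop} {h : ι → ℕ}
    (h_lt : ∀ i j, r i j → i ≠ j → h i < h j) {a b : Matrix ι ι R}
    (ha : ∀ i j, ¬ r i j → a i j = 0) (hb : ∀ i j, ¬ r i j → b i j = 0) :
    ⁅a, b⁆ ∈ heightFiltration R h 1 := by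
  refine mem_heightFiltration.mpr fun i j hij ↦ ?_
  have h_le {i j} (hr : r i j) : h i ≤ h j := by
    rcases eq_or_ne i j with rfl | hne
    exacts [le_rfl, (h_lt i j hr hne).le]
  -- since `h j ≤ h i`, only the path `i → i → j` can contribute to `(c * d) i j`
  have mul_apply_eq (c d : Matrix ι ι R) (hc : ∀ i j, ¬ r i j → c i j = 0)
      (hd : ∀ i j, ¬ r i j → d i j = 0) : (c * d) i j = c i i * d i j := by
    rw [mul_apply]
    refine Finset.sum_eq_single i (fun x _ hx ↦ ?_) (by simp)
    by_cases hix : r i x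
    · by_cases hxj : r x j
      · have := h_lt i x hix hx.symm
        have := h_le hxj
        omega
      · rw [hd x j hxj, mul_zero]
    · rw [hc i x hix, zero_mul]
  rw [Ring.lie_def, sub_apply, mul_apply_eq a b ha hb, mul_apply_eq b a hb ha]
  rcases eq_or_ne i j with rfl | hne
  · exact sub_eq_zero.mpr (mul_comm _ _)
  · have hr : ¬ r i j := fun hr ↦ by have := h_lt i j hr hne; omega
    rw [ha i j hr, hb i j hr, mul_zero, mul_zero, sub_zero]

end Matrix

/-- For any partial order `⪯` on `[n]`, the Lie algebra `gl_n^⪯(R)` of matrices supported on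
pairs `i ⪯ j` is solvable. -/
theorem stmt_4 (R : Type*) [CommRing R] (n : ℕ) (le : Fin n → Fin n → Prop)
    (hrefl : ∀ i, le i i) (hantisymm : ∀ i j, le i j → le j i → i = j)
    (htrans : ∀ i j k, le i j → le j k → le i k)
    (S : LieSubalgebra R (Matrix (Fin n) (Fin n) R))
    (hS : (S : Set (Matrix (Fin n) (Fin n) R)) =
      {m : Matrix (Fin n) (Fin n) R | ∀ i j, ¬ le i j → m i j = 0}) :
    LieAlgebra.IsSolvable S := by
  obtain ⟨h, h_lt, h_le⟩ := exists_bounded_height hrefl hantisymm htrans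
  have supported (x : S) : ∀ i j, ¬ le i j → (x : Matrix (Fin n) (Fin n) R) i j = 0 := by
    have hx : (x : Matrix (Fin n) (Fin n) R) ∈ (S : Set (Matrix (Fin n) (Fin n) R)) := x.2
    rwa [hS] at hx
  refine LieAlgebra.isSolvable_of_filtration (R := R)
    (fun g ↦ (Matrix.heightFiltration R h g).comap S.toSubmodule.subtype)
    (fun x y ↦ Matrix.lie_mem_heightFiltration_one h_lt (supported x) (supported y))
    (fun _ _ _ _ hx hy ↦ Matrix.lie_mem_heightFiltration hx hy) (N := Nat.card (Fin n)) ?_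
  rw [Matrix.heightFiltration_eq_bot h_le, Submodule.comap_bot, Submodule.ker_subtype]
end

section
/- Let e = ⋀_{a ≤ b} e_{ab} ∈ Λ^N sol_n(R) be the wedge of all N = n(n+1)/2 basis matrix units of sol_n(R) (in a fixed order). Then the Chevalley–Eilenberg boundary satisfies ∂(e) = Σ_{i=1}^n ±(2i − n − 1) · (e with e_{ii} removed); in particular, if n is odd and R has characteristic 2, then ∂(e) = 0. -/
/-!
For any Lie algebra with a basis `x₀, …, x_N`, expand each bracket `⁅x_r, x_s⁆` in the basis:
in `⁅x_r, x_s⁆ ∧ x₀ ∧ ⋯ x̂_r ⋯ x̂_s ⋯ ∧ x_N` only the components along `x_r` and `x_s` survive,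
and collecting terms gives the top-degree boundary formula
`∂(x₀ ∧ ⋯ ∧ x_N) = ∑_q (-1)^(q+1) tr(ad x_q) • x₀ ∧ ⋯ x̂_q ⋯ ∧ x_N`.
On upper triangular matrices, `⁅X, e_cd⁆` has `e_cd`-coefficient `X_cc - X_dd`, so
`tr(ad X) = ∑_c (n - 1 - 2c) X_cc` (indices from `0`). This vanishes on the off-diagonal units and
equals `n - 1 - 2i` on `e_ii`.
-/

open ExteriorAlgebra

attribute [local instance 100] LieRing.ofAssociativeRing

/-- The wedge `x₁ ∧ … ∧ xₙ`, as an element of the `n`-th exterior power `⋀[R]^n M`. -/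
noncomputable def wedge {R M : Type*} [CommRing R] [AddCommGroup M] [Module R M] (n : ℕ)
    (v : Fin n → M) : ⋀[R]^n M :=
  ⟨ιMulti R n v, ιMulti_range R n (Set.mem_range_self v)⟩

theorem wedge_eq_ιMulti {R M : Type*} [CommRing R] [AddCommGroup M] [Module R M] {n : ℕ}
    (v : Fin n → M) : wedge (R := R) n v = exteriorPower.ιMulti R n v := rfl

namespace AlternatingMap

variable {R M N : Type*} [CommRing R] [AddCommGroup M] [Module R M] [AddCommGroup N] [Module R N]
  {k : ℕ}

theorem map_cons_removeNth (g : M [⋀^Fin (k + 1)]→ₗ[R] N) (v : Fin (k + 1) → M)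
    (j : Fin (k + 1)) : g (Fin.cons (v j) (j.removeNth v)) = (-1 : ℤ) ^ (j : ℕ) • g v := by
  have h := g.neg_one_pow_smul_map_insertNth j (v j) (j.removeNth v)
  rw [Fin.insertNth_self_removeNth] at h
  exact h.symm

theorem map_cons_removeNth_removeNth_of_ne (g : M [⋀^Fin (k + 1)]→ₗ[R] N)
    (v : Fin (k + 2) → M) (s : Fin (k + 2)) (j : Fin (k + 1)) {t : Fin (k + 2)}
    (hs : t ≠ s) (hj : t ≠ s.succAbove j) :
    g (Fin.cons (v t) (j.removeNth (s.removeNth v))) = 0 := by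
  obtain ⟨t, rfl⟩ := Fin.exists_succAbove_eq hs
  obtain ⟨m, rfl⟩ := Fin.exists_succAbove_eq fun h => hj (congrArg s.succAbove h)
  exact g.map_eq_zero_of_eq _ (i := 0) (j := m.succ) rfl (Fin.succ_ne_zero m).symm

theorem map_cons_removeNth_removeNth_self (g : M [⋀^Fin (k + 1)]→ₗ[R] N)
    (v : Fin (k + 2) → M) (s : Fin (k + 2)) (j : Fin (k + 1)) :
    g (Fin.cons (v s) (j.removeNth (s.removeNth v))) =
      (-1 : ℤ) ^ (j.predAbove s : ℕ) • g ((s.succAbove j).removeNth v) := by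
  rw [Fin.removeNth_removeNth_eq_swap, ← map_cons_removeNth]
  congr 2
  simp [Fin.removeNth, Fin.succAbove_succAbove_predAbove]

theorem map_cons_removeNth_removeNth_basis (g : M [⋀^Fin (k + 1)]→ₗ[R] N)
    (b : Module.Basis (Fin (k + 2)) R M) (s : Fin (k + 2)) (j : Fin (k + 1)) (y : M) :
    g (Fin.cons y (j.removeNth (s.removeNth ⇑b))) =
      b.repr y (s.succAbove j) • (-1 : ℤ) ^ (j : ℕ) • g (s.removeNth ⇑b) +
        b.repr y s • (-1 : ℤ) ^ (j.predAbove s : ℕ) • g ((s.succAbove j).removeNth ⇑b) := by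
  have hcons : ∀ x : M, (Fin.cons x (j.removeNth (s.removeNth ⇑b)) : Fin (k + 1) → M) =
      Function.update (Fin.cons 0 (j.removeNth (s.removeNth ⇑b))) 0 x :=
    fun x => (Fin.update_cons_zero _ _ _).symm
  conv_lhs => rw [hcons, ← b.sum_repr y, g.map_update_sum]
  simp only [g.map_update_smul]
  simp only [← hcons]
  rw [Fintype.sum_eq_add (s.succAbove j) s (Fin.succAbove_ne s j)
    fun t ht => by rw [map_cons_removeNth_removeNth_of_ne g _ s j ht.2 ht.1, smul_zero],
    map_cons_removeNth_removeNth_self]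
  congr 2
  exact g.map_cons_removeNth (s.removeNth ⇑b) j

end AlternatingMap

theorem Fintype.sum_sum_eq_sum_sum_lt_add_swap {ι M : Type*} [Fintype ι] [LinearOrder ι]
    [AddCommMonoid M] (φ : ι → ι → M) (hφ : ∀ i, φ i i = 0) :
    ∑ i, ∑ j, φ i j = ∑ i, ∑ j, if i < j then φ i j + φ j i else 0 := by
  calc ∑ i, ∑ j, φ i j
      = ∑ i, ∑ j, ((if i < j then φ i j else 0) + if j < i then φ i j else 0) := by
        refine Fintype.sum_congr _ _ fun i => Fintype.sum_congr _ _ fun j => ?_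
        rcases lt_trichotomy i j with h | rfl | h
        · simp [h, h.not_gt]
        · simp [hφ]
        · simp [h, h.not_gt]
    _ = ∑ i, ∑ j, if i < j then φ i j + φ j i else 0 := by
        simp only [Finset.sum_add_distrib]
        rw [Finset.sum_comm (f := fun i j => if j < i then φ i j else 0),
          ← Finset.sum_add_distrib]
        refine Fintype.sum_congr _ _ fun i => ?_
        rw [← Finset.sum_add_distrib]
        refine Fintype.sum_congr _ _ fun j => ?_
        split_ifs <;> simp

section ChevalleyEilenberg

variable {R L : Type*} [CommRing R] [LieRing L] [LieAlgebra R L] {k : ℕ}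

theorem trace_ad_eq_sum_repr {ι : Type*} [Fintype ι] [DecidableEq ι] (b : Module.Basis ι R L)
    (x : L) : LinearMap.trace R L (LieAlgebra.ad R L x) = ∑ u, b.repr ⁅x, b u⁆ u := by
  simp [LinearMap.trace_eq_matrix_trace R b, Matrix.trace, LinearMap.toMatrix_apply]

variable (R) in
noncomputable def ceBoundary (k : ℕ) (x : Fin (k + 2) → L) : ⋀[R]^(k + 1) L :=
  ∑ r : Fin (k + 2), ∑ s : Fin (k + 2),
    if h : r < s then
      ((-1 : ℤ) ^ ((r : ℕ) + (s : ℕ))) •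
        wedge (k + 1)
          (Fin.cons ⁅x r, x s⁆ ((r.castPred (Fin.ne_last_of_lt h)).removeNth (s.removeNth x)))
    else 0

theorem neg_one_pow_smul_wedge_cons_lie_basis (b : Module.Basis (Fin (k + 2)) R L)
    {r s : Fin (k + 2)} (h : r < s) :
    ((-1 : ℤ) ^ ((r : ℕ) + (s : ℕ))) • wedge (R := R) (k + 1)
        (Fin.cons ⁅b r, b s⁆ ((r.castPred (Fin.ne_last_of_lt h)).removeNth (s.removeNth ⇑b))) =
      (-1 : ℤ) ^ ((r : ℕ) + 1) • b.repr ⁅b r, b s⁆ s • wedge (k + 1) (r.removeNth ⇑b) +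
        (-1 : ℤ) ^ ((s : ℕ) + 1) • b.repr ⁅b s, b r⁆ r • wedge (k + 1) (s.removeNth ⇑b) := by
  set j := r.castPred (Fin.ne_last_of_lt h)
  have hr : s.succAbove j = r := Fin.succAbove_castPred_of_lt s r h
  have hj : (j : ℕ) = r := Fin.coe_castPred _ _
  have hpa : (-1 : ℤ) ^ ((r : ℕ) + (j.predAbove s : ℕ)) = -(-1) ^ ((s : ℕ) + r) := by
    simpa [hr, hj] using Fin.neg_one_pow_succAbove_add_predAbove (R := ℤ) s j
  have hsign_s : (-1 : ℤ) ^ ((r : ℕ) + s) * (-1) ^ (j : ℕ) = -(-1) ^ ((s : ℕ) + 1) := by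
    rw [hj]
    linear_combination (-1 : ℤ) ^ (s : ℕ) *
      (Even.neg_one_pow ⟨(r : ℕ), rfl⟩ : (-1 : ℤ) ^ ((r : ℕ) + r) = 1)
  have hsign_r : (-1 : ℤ) ^ ((r : ℕ) + s) * (-1) ^ (j.predAbove s : ℕ) = (-1) ^ ((r : ℕ) + 1) := by
    linear_combination (-1 : ℤ) ^ (s : ℕ) * hpa -
      (-1 : ℤ) ^ (r : ℕ) * (Even.neg_one_pow ⟨(s : ℕ), rfl⟩ : (-1 : ℤ) ^ ((s : ℕ) + s) = 1)
  have hskew : b.repr ⁅b s, b r⁆ r = -b.repr ⁅b r, b s⁆ r := by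
    rw [← lie_skew, map_neg, Finsupp.neg_apply]
  rw [wedge_eq_ιMulti, AlternatingMap.map_cons_removeNth_removeNth_basis, hr, smul_add,
    smul_comm _ (b.repr _ r), smul_comm _ (b.repr _ s), smul_smul, smul_smul, hsign_s, hsign_r,
    hskew, wedge_eq_ιMulti, wedge_eq_ιMulti]
  module

theorem ceBoundary_basis_eq_sum_trace_ad (b : Module.Basis (Fin (k + 2)) R L) :
    ceBoundary R k ⇑b = ∑ q : Fin (k + 2), (-1 : ℤ) ^ ((q : ℕ) + 1) •
      LinearMap.trace R L (LieAlgebra.ad R L (b q)) • wedge (k + 1) (q.removeNth ⇑b) := by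
  set φ : Fin (k + 2) → Fin (k + 2) → ⋀[R]^(k + 1) L := fun q u =>
    (-1 : ℤ) ^ ((q : ℕ) + 1) • b.repr ⁅b q, b u⁆ u • wedge (k + 1) (q.removeNth ⇑b) with hφ
  calc ceBoundary R k ⇑b = ∑ r, ∑ s, if r < s then φ r s + φ s r else 0 := by
        refine Fintype.sum_congr _ _ fun r => Fintype.sum_congr _ _ fun s => ?_
        split_ifs with h
        · exact neg_one_pow_smul_wedge_cons_lie_basis b h
        · rfl
    _ = ∑ q, ∑ u, φ q u :=
        (Fintype.sum_sum_eq_sum_sum_lt_add_swap φ fun q => by simp [hφ]).symm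
    _ = _ := by
        simp only [hφ, trace_ad_eq_sum_repr b, Finset.sum_smul, Finset.smul_sum]

theorem boundary_wedge_basis_eq_sum_trace_ad {N : ℕ}
    (d : ∀ k : ℕ, (⋀[R]^(k + 1) L) →ₗ[R] ⋀[R]^k L)
    (hd : ∀ (k : ℕ) (x : Fin (k + 2) → L), d (k + 1) (wedge (k + 2) x) = ceBoundary R k x)
    (hd0 : ∀ x : Fin 1 → L, d 0 (wedge 1 x) = 0) (b : Module.Basis (Fin (N + 1)) R L) :
    d N (wedge (N + 1) ⇑b) = ∑ q : Fin (N + 1), (-1 : ℤ) ^ ((q : ℕ) + 1) •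
      LinearMap.trace R L (LieAlgebra.ad R L (b q)) • wedge N (q.removeNth ⇑b) := by
  cases N with
  | zero => simp [hd0, trace_ad_eq_sum_repr b]
  | succ k => rw [hd, ceBoundary_basis_eq_sum_trace_ad]

end ChevalleyEilenberg

theorem Fin.sum_pairs_le_sub_eq_sum_mul {R : Type*} [CommRing R] {n : ℕ} (g : Fin n → R) :
    ∑ p : {p : Fin n × Fin n // p.1 ≤ p.2}, (g p.1.1 - g p.1.2) =
      ∑ c : Fin n, ((n : R) - 2 * (c : ℕ) - 1) * g c := by
  rw [← Finset.sum_subtype (Finset.univ.filter fun p : Fin n × Fin n => p.1 ≤ p.2) (by simp)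
    fun p => g p.1 - g p.2, Finset.sum_filter, Fintype.sum_prod_type]
  have hIci : ∀ c : Fin n, ∑ d, (if c ≤ d then g c else 0) = ((n : R) - c) * g c := by
    intro c
    rw [Finset.sum_ite, Finset.sum_const_zero, add_zero, Finset.sum_const,
      Finset.filter_le_eq_Ici, Fin.card_Ici, nsmul_eq_mul, Nat.cast_sub c.is_lt.le]
  have hIic : ∀ d : Fin n, ∑ c, (if c ≤ d then g d else 0) = ((d : R) + 1) * g d := by
    intro d
    rw [Finset.sum_ite, Finset.sum_const_zero, add_zero, Finset.sum_const,
      Finset.filter_ge_eq_Iic, Fin.card_Iic, nsmul_eq_mul]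
    push_cast
    ring
  have hsplit : ∀ c d : Fin n, (if c ≤ d then g c - g d else 0) =
      (if c ≤ d then g c else 0) - (if c ≤ d then g d else 0) := by
    intro c d
    split_ifs <;> simp
  simp only [hsplit, Finset.sum_sub_distrib]
  rw [Finset.sum_comm (f := fun c d => if c ≤ d then g d else 0), ← Finset.sum_sub_distrib]
  refine Fintype.sum_congr _ _ fun c => ?_
  rw [hIci, hIic]
  ring

section UpperTriangular

variable (R : Type*) [CommRing R] (n : ℕ)

abbrev upperTriangular : LieSubalgebra R (Matrix (Fin n) (Fin n) R) :=
  lieSubalgebraOfSubalgebra R _ (Matrix.blockTriangularSubalgebra R R id)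

theorem coe_upperTriangular : (upperTriangular R n : Set (Matrix (Fin n) (Fin n) R)) =
    {m | ∀ i j : Fin n, j < i → m i j = 0} :=
  Set.ext fun _ => ⟨fun h _ _ hij => h hij, fun h _ _ hij => h _ _ hij⟩

noncomputable def upperTriangularEquivFun :
    upperTriangular R n ≃ₗ[R] ({p : Fin n × Fin n // p.1 ≤ p.2} → R) where
  toFun X p := (X : Matrix (Fin n) (Fin n) R) p.1.1 p.1.2
  invFun v := ⟨Matrix.of fun i j => if h : i ≤ j then v ⟨(i, j), h⟩ else 0,
    fun _ _ hij => dif_neg (not_le.mpr hij)⟩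
  map_add' _ _ := rfl
  map_smul' _ _ := rfl
  left_inv X := Subtype.ext <| Matrix.ext fun i j => by
    by_cases h : i ≤ j
    · simp [h]
    · simp [h, X.2 (not_le.mp h)]
  right_inv v := funext fun p => dif_pos p.2

noncomputable def upperTriangularBasis :
    Module.Basis {p : Fin n × Fin n // p.1 ≤ p.2} R (upperTriangular R n) :=
  .ofEquivFun (upperTriangularEquivFun R n)

variable {R n}

theorem upperTriangularBasis_repr (X : upperTriangular R n)
    (p : {p : Fin n × Fin n // p.1 ≤ p.2}) :
    (upperTriangularBasis R n).repr X p = (X : Matrix (Fin n) (Fin n) R) p.1.1 p.1.2 := rfl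

theorem coe_upperTriangularBasis (p : {p : Fin n × Fin n // p.1 ≤ p.2}) :
    (upperTriangularBasis R n p : Matrix (Fin n) (Fin n) R) = Matrix.single p.1.1 p.1.2 1 := by
  ext i j
  obtain ⟨⟨a, b⟩, hab⟩ := p
  simp only [upperTriangularBasis, upperTriangularEquivFun, Module.Basis.coe_ofEquivFun,
    LinearEquiv.coe_symm_mk', Matrix.of_apply, Matrix.single_apply, Pi.single_apply,
    Subtype.ext_iff, Prod.ext_iff]
  by_cases h : a = i ∧ b = j
  · obtain ⟨rfl, rfl⟩ := h
    simp [hab]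
  · rw [if_neg h]
    split_ifs with _ h'
    exacts [absurd ⟨h'.1.symm, h'.2.symm⟩ h, rfl, rfl]

theorem trace_ad_upperTriangular (X : upperTriangular R n) :
    LinearMap.trace R _ (LieAlgebra.ad R _ X) =
      ∑ c : Fin n, ((n : R) - 2 * (c : ℕ) - 1) * (X : Matrix (Fin n) (Fin n) R) c c := by
  rw [trace_ad_eq_sum_repr (upperTriangularBasis R n), ← Fin.sum_pairs_le_sub_eq_sum_mul]
  refine Fintype.sum_congr _ _ fun p => ?_
  rw [upperTriangularBasis_repr, LieSubalgebra.coe_bracket, Ring.lie_def,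
    coe_upperTriangularBasis, Matrix.sub_apply, Matrix.mul_single_apply_same,
    Matrix.single_mul_apply_same, mul_one, one_mul]

variable {ι : Type*} {f : ι → upperTriangular R n}

theorem linearIndependent_of_forall_eq_single (hf : Function.Injective f)
    (hf1 : ∀ i, ∃ a b : Fin n, a ≤ b ∧ (f i : Matrix (Fin n) (Fin n) R) = Matrix.single a b 1) :
    LinearIndependent R f := by
  choose a b hab hfab using hf1
  have hfe : f = upperTriangularBasis R n ∘ fun i => ⟨(a i, b i), hab i⟩ :=
    funext fun i => Subtype.ext <| by simp [coe_upperTriangularBasis, hfab]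
  rw [hfe] at hf ⊢
  exact (upperTriangularBasis R n).linearIndependent.comp _ hf.of_comp

theorem top_le_span_of_forall_eq_single
    (hf2 : ∀ a b : Fin n, a ≤ b → ∃ i, (f i : Matrix (Fin n) (Fin n) R) = Matrix.single a b 1) :
    ⊤ ≤ Submodule.span R (Set.range f) := by
  rw [← (upperTriangularBasis R n).span_eq]
  refine Submodule.span_mono (Set.range_subset_iff.mpr fun p => ?_)
  obtain ⟨i, hi⟩ := hf2 p.1.1 p.1.2 p.2
  exact ⟨i, Subtype.ext (hi.trans (coe_upperTriangularBasis p).symm)⟩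

theorem diag_apply_of_forall_eq_single [DecidableEq ι] (hf : Function.Injective f)
    (hf1 : ∀ i, ∃ a b : Fin n, a ≤ b ∧ (f i : Matrix (Fin n) (Fin n) R) = Matrix.single a b 1)
    {p : Fin n → ι} (hp : ∀ i, (f (p i) : Matrix (Fin n) (Fin n) R) = Matrix.single i i 1)
    (q : ι) (c : Fin n) : (f q : Matrix (Fin n) (Fin n) R) c c = if q = p c then 1 else 0 := by
  split_ifs with h
  · rw [h, hp, Matrix.single_apply_same]
  · obtain ⟨a, b, -, hq⟩ := hf1 q
    rw [hq, Matrix.single_apply_of_ne]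
    rintro ⟨rfl, rfl⟩
    exact h (hf (Subtype.ext (hq.trans (hp _).symm)))

theorem sum_trace_ad_smul_of_diag {V : Type*} [AddCommGroup V] [Module R V] [Fintype ι]
    [DecidableEq ι] {p : Fin n → ι}
    (hdiag : ∀ q c, (f q : Matrix (Fin n) (Fin n) R) c c = if q = p c then 1 else 0)
    (w : ι → V) :
    ∑ q, LinearMap.trace R _ (LieAlgebra.ad R _ (f q)) • w q =
      ∑ c : Fin n, ((n : ℤ) - 2 * (c : ℕ) - 1) • w (p c) := by
  simp only [trace_ad_upperTriangular, hdiag, mul_ite, mul_one, mul_zero, Finset.sum_smul,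
    ite_smul, zero_smul]
  rw [Finset.sum_comm]
  simp [← Int.cast_smul_eq_zsmul R]

end UpperTriangular

theorem zsmul_eq_zero_of_even {R V : Type*} [CommRing R] [AddCommGroup V] [Module R V]
    (h2 : (2 : R) = 0) {z : ℤ} (hz : Even z) (w : V) : z • w = 0 := by
  obtain ⟨m, rfl⟩ := hz
  rw [add_smul, ← two_smul R, h2, zero_smul]

/-- Let `e` be the wedge of all `N = n(n+1)/2` basis matrix units of `sol_n(R)` (in a fixed
order, given by an enumeration `f`).  Then the Chevalley–Eilenberg boundary satisfies
`∂(e) = Σ_{i=1}^n ±(2i − n − 1) · (e with e_{ii} removed)`; in particular, if `n` is odd and `2 = 0`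
in `R`, then `∂(e) = 0`. -/
theorem stmt_13 (R : Type*) [CommRing R] (n M : ℕ)
    (S : LieSubalgebra R (Matrix (Fin n) (Fin n) R))
    (hS : (S : Set (Matrix (Fin n) (Fin n) R)) =
      {m : Matrix (Fin n) (Fin n) R | ∀ i j : Fin n, j < i → m i j = 0})
    (d : ∀ k : ℕ, (⋀[R]^(k + 1) ↥S) →ₗ[R] ⋀[R]^k ↥S)
    (hd : ∀ (k : ℕ) (x : Fin (k + 2) → ↥S),
      d (k + 1) (wedge (k + 2) x) =
        ∑ r : Fin (k + 2), ∑ s : Fin (k + 2),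
          if h : r < s then
            ((-1 : ℤ) ^ ((r : ℕ) + (s : ℕ))) •
              wedge (k + 1)
                (Fin.cons ⁅x r, x s⁆
                  (x ∘ fun i : Fin k =>
                    s.succAbove
                      ((⟨(r : ℕ), by
                        have h1 : (r : ℕ) < (s : ℕ) := h
                        have h2 := s.isLt
                        omega⟩ : Fin (k + 1)).succAbove i)))
          else 0)
    (hd0 : ∀ x : Fin 1 → ↥S, d 0 (wedge 1 x) = 0)
    -- `f` enumerates the basis matrix units `{e_{ab} : a ≤ b}` of `sol_n(R)`
    (f : Fin (M + 1) → ↥S) (hf : Function.Injective f)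
    (hf1 : ∀ i, ∃ a b : Fin n, a ≤ b ∧
      (f i : Matrix (Fin n) (Fin n) R) = Matrix.single a b 1)
    (hf2 : ∀ a b : Fin n, a ≤ b →
      ∃ i, (f i : Matrix (Fin n) (Fin n) R) = Matrix.single a b 1)
    -- `p i` is the position of the diagonal unit `e_{ii}` in the enumeration
    (p : Fin n → Fin (M + 1))
    (hp : ∀ i : Fin n, (f (p i) : Matrix (Fin n) (Fin n) R) = Matrix.single i i 1) :
    (∃ ε : Fin n → ℤ, (∀ i, ε i = 1 ∨ ε i = -1) ∧
      d M (wedge (M + 1) f) =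
        ∑ i : Fin n,
          ((ε i * (2 * (i : ℕ) + 1 - (n : ℤ))) • wedge M (f ∘ (p i).succAbove))) ∧
    (Odd n → (2 : R) = 0 → d M (wedge (M + 1) f) = 0) := by
  obtain rfl : S = upperTriangular R n :=
    SetLike.coe_injective (hS.trans (coe_upperTriangular R n).symm)
  set b := Module.Basis.mk (linearIndependent_of_forall_eq_single hf hf1)
    (top_le_span_of_forall_eq_single hf2)
  have hb : ⇑b = f := Module.Basis.coe_mk _ _
  have hdiag := diag_apply_of_forall_eq_single hf hf1 hp
  rw [← hb] at hdiag
  have key : d M (wedge (M + 1) f) = ∑ i : Fin n,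
      ((-1 : ℤ) ^ (p i : ℕ) * (2 * (i : ℕ) + 1 - (n : ℤ))) • wedge M (f ∘ (p i).succAbove) := by
    rw [← hb, boundary_wedge_basis_eq_sum_trace_ad d hd hd0 b]
    simp only [smul_comm ((-1 : ℤ) ^ _) (LinearMap.trace _ _ _)]
    rw [sum_trace_ad_smul_of_diag hdiag
      fun q => (-1 : ℤ) ^ ((q : ℕ) + 1) • wedge M (q.removeNth ⇑b)]
    refine Fintype.sum_congr _ _ fun i => ?_
    rw [smul_smul]
    congr 1
    ring
  refine ⟨⟨fun i => (-1) ^ (p i : ℕ), fun i => neg_one_pow_eq_or ℤ _, key⟩, fun hn h2 => ?_⟩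
  rw [key]
  refine Finset.sum_eq_zero fun i _ => zsmul_eq_zero_of_even h2 (Even.mul_left ?_ _) _
  obtain ⟨l, rfl⟩ := hn
  exact ⟨i - l, by push_cast; ring⟩
end
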